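/- arXiv:2409.00680 — 2 statements merged into one kernel-verified Lean document; each statement's English description precedes it below -/
import Mathlib

section
/- Define H(n) = ∑_{k∈ℤ} (-1)^k q^{3k(k-1)/2} (1 - q^k) q^{(1+n)k} for 0 < |q| < 1. Then for every integer L ≥ 0: H(3L) = (q;q)_∞ · (-1)^L (q^L − 1) q^{-3L²/2 − L/2}, H(3L+1) = (q;q)_∞ · (-1)^L q^{-3L²/2 − L/2}, and H(3L+2) = (q;q)_∞ · (-1)^L q^{(-3L/2 − 1)(L+1)}. -/
noncomputable def qpInf (q x : ℂ) : ℂ := ∏' i : ℕ, (1 - x * q ^ i)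

noncomputable def H (q : ℂ) (n : ℤ) : ℂ :=
  ∑' k : ℤ, (-1 : ℂ) ^ k * q ^ (3 * (k * (k - 1) / 2)) * (1 - q ^ k) * q ^ ((1 + n) * k)

open Filter Finset Complex Topology


noncomputable def lg (Q : ℂ) (i : ℕ) : ℂ := Complex.log (1 - Q^(i+1))
noncomputable def pp (Q : ℂ) (m : ℕ) : ℂ := ∏ i ∈ Finset.range m, (1 - Q^(i+1))

lemma hfac {Q : ℂ} (hQ : ‖Q‖ < 1) (i : ℕ) : (1:ℂ) - Q^(i+1) ≠ 0 := by
  intro h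
  have h2 : Q^(i+1) = 1 := by linear_combination -h
  have : ‖Q^(i+1)‖ < 1 := by
    rw [norm_pow]
    exact pow_lt_one₀ (norm_nonneg _) hQ (Nat.succ_ne_zero i)
  rw [h2] at this; simp at this

lemma pp_ne {Q : ℂ} (hQ : ‖Q‖ < 1) (m : ℕ) : pp Q m ≠ 0 :=
  Finset.prod_ne_zero_iff.2 fun i _ => hfac hQ i

lemma summable_norm_lg {Q : ℂ} (hQ : ‖Q‖ < 1) : Summable (fun i => ‖lg Q i‖) := by
  obtain ⟨N, hN⟩ : ∃ N : ℕ, ‖Q‖^(N+1) ≤ 1/2 := by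
    rcases eq_or_lt_of_le (norm_nonneg Q) with h | h
    · exact ⟨0, by rw [← h]; norm_num⟩
    · obtain ⟨N, hN⟩ := exists_pow_lt_of_lt_one (by norm_num : (0:ℝ) < 1/2) hQ
      exact ⟨N, by
        calc ‖Q‖^(N+1) ≤ ‖Q‖^N := pow_le_pow_of_le_one (norm_nonneg _) hQ.le (by omega)
        _ ≤ 1/2 := hN.le⟩
  rw [← summable_nat_add_iff N]
  have hsum : Summable (fun i : ℕ => 3/2 * ‖Q‖^(i+N+1)) := by
    apply Summable.mul_left
    have : Summable (fun i : ℕ => ‖Q‖^i * ‖Q‖^(N+1)) :=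
      (summable_geometric_of_lt_one (norm_nonneg _) hQ).mul_right _
    apply this.congr
    intro i; rw [← pow_add]; ring_nf
  apply Summable.of_nonneg_of_le (fun i => norm_nonneg _) _ hsum
  intro i
  show ‖lg Q (i + N)‖ ≤ _
  · 
    have hle : ‖Q‖^(i+N+1) ≤ 1/2 := by
      calc ‖Q‖^(i+N+1) ≤ ‖Q‖^(N+1) := pow_le_pow_of_le_one (norm_nonneg _) hQ.le (by omega)
      _ ≤ 1/2 := hN
    have : (1:ℂ) - Q^(i+N+1) = 1 + (-(Q^(i+N+1))) := by ring
    rw [lg, this]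
    have := Complex.norm_log_one_add_half_le_self (z := -(Q^(i+N+1)))
      (by rwa [norm_neg, norm_pow])
    simpa [norm_pow] using this

lemma summable_lg {Q : ℂ} (hQ : ‖Q‖ < 1) : Summable (lg Q) :=
  (summable_norm_lg hQ).of_norm

noncomputable def Slg (Q : ℂ) : ℝ := ∑' i, ‖lg Q i‖

lemma ell_bound {Q : ℂ} (hQ : ‖Q‖ < 1) (m : ℕ) : ‖∑ i ∈ range m, lg Q i‖ ≤ Slg Q := by
  calc ‖∑ i ∈ range m, lg Q i‖ ≤ ∑ i ∈ range m, ‖lg Q i‖ := norm_sum_le _ _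
  _ ≤ Slg Q := Summable.sum_le_tsum _ (fun i _ => norm_nonneg _) (summable_norm_lg hQ)

lemma pp_eq_exp {Q : ℂ} (hQ : ‖Q‖ < 1) (m : ℕ) :
    pp Q m = Complex.exp (∑ i ∈ range m, lg Q i) := by
  rw [Complex.exp_sum]
  exact Finset.prod_congr rfl fun i _ => (Complex.exp_log (hfac hQ i)).symm

lemma tendsto_ell {Q : ℂ} (hQ : ‖Q‖ < 1) :
    Tendsto (fun m => ∑ i ∈ range m, lg Q i) atTop (𝓝 (∑' i, lg Q i)) :=
  (summable_lg hQ).hasSum.tendsto_sum_nat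

lemma tendsto_pp {Q : ℂ} (hQ : ‖Q‖ < 1) :
    Tendsto (pp Q) atTop (𝓝 (Complex.exp (∑' i, lg Q i))) := by
  have : Tendsto (fun m => Complex.exp (∑ i ∈ range m, lg Q i)) atTop
      (𝓝 (Complex.exp (∑' i, lg Q i))) :=
    (Complex.continuous_exp.continuousAt).tendsto.comp (tendsto_ell hQ)
  exact this.congr fun m => (pp_eq_exp hQ m).symm

lemma tprod_eq_exp {Q : ℂ} (hQ : ‖Q‖ < 1) :
    (∏' i : ℕ, (1 - Q^(i+1))) = Complex.exp (∑' i, lg Q i) := by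
  have := Complex.cexp_tsum_eq_tprod (f := fun i : ℕ => 1 - Q^(i+1))
    (fun i => hfac hQ i) (summable_lg hQ)
  have h2 := this
  simpa [lg] using h2.symm

section P2
variable {Q : ℂ}

noncomputable def gb (Q : ℂ) (m i : ℕ) : ℂ :=
  if i ≤ m then pp Q m / (pp Q i * pp Q (m-i)) else 0

lemma pp_succ (Q : ℂ) (m : ℕ) : pp Q (m+1) = pp Q m * (1 - Q^(m+1)) :=
  Finset.prod_range_succ _ _

lemma gb_zero (hQ : ‖Q‖ < 1) (m : ℕ) : gb Q m 0 = 1 := by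
  rw [gb, if_pos (Nat.zero_le m), Nat.sub_zero]
  have h0 : pp Q 0 = 1 := by simp [pp]
  rw [h0, one_mul, div_self (pp_ne hQ m)]

lemma gb_self (hQ : ‖Q‖ < 1) (m : ℕ) : gb Q m m = 1 := by
  rw [gb, if_pos le_rfl, Nat.sub_self]
  have h0 : pp Q 0 = 1 := by simp [pp]
  rw [h0, mul_one, div_self (pp_ne hQ m)]

lemma gb_of_gt {m i : ℕ} (h : m < i) : gb Q m i = 0 := by
  simp [gb, Nat.not_le.2 h]

lemma pascal (hQ : ‖Q‖ < 1) (m i : ℕ) :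
    gb Q (m+1) (i+1) = gb Q m (i+1) + Q^(m-i) * gb Q m i := by
  rcases lt_trichotomy i m with h | rfl | h
  · -- i < m
    obtain ⟨d, rfl⟩ : ∃ d, m = i + (d + 1) := ⟨m - i - 1, by omega⟩
    have e1 : i + (d+1) + 1 - (i+1) = d + 1 := by omega
    have e2 : i + (d+1) - (i+1) = d := by omega
    have e3 : i + (d+1) - i = d+1 := by omega
    rw [gb, gb, gb, if_pos (by omega), if_pos (by omega), if_pos (by omega), e1, e2, e3]
    have hx : i + (d+1) + 1 = (i + d + 1) + 1 := by omega
    have hy : i + (d+1) = (i + d) + 1 := by omega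
    rw [hx, pp_succ, hy, pp_succ]
    rw [show d + 1 = d + 1 from rfl, pp_succ Q d, show i + 1 = i + 1 from rfl, pp_succ Q i]
    have h1 := pp_ne hQ i
    have h2 := pp_ne hQ d
    have h3 := pp_ne hQ (i+d+1)
    have f1 := hfac hQ i
    have f2 := hfac hQ d
    have f3 := hfac hQ (i+d+1)
    field_simp
    ring
  · -- i = m
    rw [gb_self hQ, gb_of_gt (by omega), gb_self hQ]
    simp
  · -- m < i
    rw [gb_of_gt (by omega), gb_of_gt (by omega), gb_of_gt h]
    simp

noncomputable def ee (Q : ℂ) : ℕ → ℂ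
  | 0 => 1
  | (i+1) => ee Q i * Q^i

lemma gaussF (hQ : ‖Q‖ < 1) (z : ℂ) :
    ∀ m : ℕ, ∏ k ∈ range m, (1 + z * Q^k) =
      ∑ i ∈ range (m+1), gb Q m i * ee Q i * z^i := by
  intro m
  induction m with
  | zero => simp [gb_zero hQ, ee]
  | succ m ih =>
    rw [prod_range_succ, ih]
    rw [Finset.sum_range_succ' (fun i => gb Q (m+1) i * ee Q i * z^i) (m+1)]
    have hP : ∀ i ∈ range (m+1), gb Q (m+1) (i+1) * ee Q (i+1) * z^(i+1) =
        gb Q m (i+1) * ee Q (i+1) * z^(i+1) + (gb Q m i * ee Q i * z^i) * (z * Q^m) := by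
      intro i hi
      rw [pascal hQ m i]
      have : Q^(m-i) * Q^i = Q^m := by
        rw [← pow_add]; congr 1; exact Nat.sub_add_cancel (by simpa using Nat.lt_succ_iff.1 (mem_range.1 hi))
      show (gb Q m (i+1) + Q^(m-i) * gb Q m i) * ee Q (i+1) * z^(i+1) = _
      rw [show ee Q (i+1) = ee Q i * Q^i from rfl]
      rw [← this]
      ring
    rw [Finset.sum_congr rfl hP, Finset.sum_add_distrib]
    have h1 : ∑ i ∈ range (m+1), gb Q m (i+1) * ee Q (i+1) * z^(i+1) +
        gb Q (m+1) 0 * ee Q 0 * z^0 = ∑ i ∈ range (m+2), gb Q m i * ee Q i * z^i := by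
      rw [Finset.sum_range_succ' (fun i => gb Q m i * ee Q i * z^i) (m+1)]
      rw [gb_zero hQ, gb_zero hQ]
    have h2 : ∑ i ∈ range (m+2), gb Q m i * ee Q i * z^i =
        ∑ i ∈ range (m+1), gb Q m i * ee Q i * z^i := by
      rw [Finset.sum_range_succ, gb_of_gt (by omega)]
      simp
    rw [← Finset.sum_mul]
    calc (∑ i ∈ range (m+1), gb Q m i * ee Q i * z^i) * (1 + z * Q^m)
        = (∑ i ∈ range (m+1), gb Q m i * ee Q i * z^i) +
          (∑ i ∈ range (m+1), gb Q m i * ee Q i * z^i) * (z * Q^m) := by ring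
    _ = _ := by rw [← h2, ← h1]; ring

end P2
noncomputable def uu (q : ℂ) (j : ℤ) : ℂ := (-1:ℂ)^j * q^(j*(3*j+1)/2)

lemma twoE (j : ℤ) : 2*(j*(3*j+1)/2) = j*(3*j+1) := by
  apply Int.two_mul_ediv_two_of_even
  rcases Int.even_or_odd j with ⟨t, rfl⟩ | ⟨t, rfl⟩
  · exact ⟨t*(3*(t+t)+1), by ring⟩
  · exact ⟨(2*t+1)*(3*t+2), by ring⟩

lemma E_succ (j : ℤ) : (j+1)*(3*(j+1)+1)/2 = j*(3*j+1)/2 + (3*j+2) := by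
  apply mul_left_cancel₀ (two_ne_zero (α := ℤ))
  calc 2*((j+1)*(3*(j+1)+1)/2) = (j+1)*(3*(j+1)+1) := twoE (j+1)
  _ = j*(3*j+1) + 2*(3*j+2) := by ring
  _ = 2*(j*(3*j+1)/2) + 2*(3*j+2) := by rw [twoE]
  _ = 2*(j*(3*j+1)/2 + (3*j+2)) := by ring

section Spec
variable {q : ℂ}

lemma uu_zero : uu q 0 = 1 := by simp [uu]

lemma uu_succ (hq : q ≠ 0) (j : ℤ) : uu q (j+1) = -q^(3*j+2) * uu q j := by
  unfold uu
  rw [E_succ, zpow_add₀ hq, zpow_add₀ (by norm_num : (-1:ℂ) ≠ 0) j 1]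
  ring

lemma uu_pred (hq : q ≠ 0) (j : ℤ) : uu q (j-1) = -q^(1-3*j) * uu q j := by
  have h := uu_succ hq (j-1)
  rw [sub_add_cancel] at h
  have h3 : q^(3*(j-1)+2) * q^(1-3*j) = 1 := by
    have he : (3*(j-1)+2) + (1-3*j) = 0 := by ring
    rw [← zpow_add₀ hq, he, zpow_zero]
  rw [h, show -q^(1-3*j) * (-q^(3*(j-1)+2) * uu q (j-1)) =
    q^(3*(j-1)+2) * q^(1-3*j) * uu q (j-1) from by ring, h3, one_mul]

lemma key_base (hq : q ≠ 0) : ∀ n : ℕ, (∏ k ∈ range n, (-q^(-(3*(k:ℤ))-1))) * uu q (-(n:ℤ)) = 1 := by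
  intro n
  induction n with
  | zero => simp [uu_zero]
  | succ n ih =>
    rw [prod_range_succ]
    have hc : (-((n:ℕ)+1:ℕ):ℤ) = (-(n:ℤ)) - 1 := by push_cast; ring
    have : uu q (-((n+1:ℕ)):ℤ) = -q^(1-3*(-(n:ℤ))) * uu q (-(n:ℤ)) := by
      rw [show ((-((n+1:ℕ)):ℤ)) = (-(n:ℤ)) - 1 by push_cast; ring]
      exact uu_pred hq _
    rw [this]
    have h3 : q^(-(3*(n:ℤ))-1) * q^(1-3*(-(n:ℤ))) = 1 := by
      have he : (-(3*(n:ℤ))-1) + (1-3*(-(n:ℤ))) = 0 := by ring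
      rw [← zpow_add₀ hq, he, zpow_zero]
    calc (∏ k ∈ range n, (-q^(-(3*(k:ℤ))-1))) * -q^(-(3*(n:ℤ))-1) *
          (-q^(1-3*(-(n:ℤ))) * uu q (-(n:ℤ)))
        = ((∏ k ∈ range n, (-q^(-(3*(k:ℤ))-1))) * uu q (-(n:ℤ))) *
          (q^(-(3*(n:ℤ))-1) * q^(1-3*(-(n:ℤ)))) := by ring
    _ = 1 := by rw [ih, h3, one_mul]

lemma key (hq : q ≠ 0) (n i : ℕ) :
    (∏ k ∈ range n, (-q^(-(3*(k:ℤ))-1))) * uu q ((i:ℤ) - n) =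
      ee (q^3) i * (-q^(2-3*(n:ℤ)))^i := by
  induction i with
  | zero => simpa [ee] using key_base hq n
  | succ i ih =>
    have hcast : ((i+1:ℕ):ℤ) - n = ((i:ℤ) - n) + 1 := by push_cast; ring
    rw [hcast, uu_succ hq, show ee (q^3) (i+1) = ee (q^3) i * (q^3)^i from rfl, pow_succ]
    have h3 : -q^(3*((i:ℤ)-n)+2) = (q^3)^i * (-q^(2-3*(n:ℤ))) := by
      have hp : (q^3)^i = q^(((3*i : ℕ):ℤ)) := by rw [zpow_natCast, pow_mul]
      have hee : ((3*i:ℕ):ℤ) + (2-3*(n:ℤ)) = 3*((i:ℤ)-n)+2 := by push_cast; ring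
      rw [hp, show (q:ℂ) ^ (((3*i:ℕ):ℤ)) * -q^(2-3*(n:ℤ)) =
        -(q^(((3*i:ℕ):ℤ) + (2-3*(n:ℤ)))) from by rw [zpow_add₀ hq]; ring, hee]
    calc (∏ k ∈ range n, (-q^(-(3*(k:ℤ))-1))) * (-q^(3*((i:ℤ)-n)+2) * uu q ((i:ℤ)-n))
        = ((∏ k ∈ range n, (-q^(-(3*(k:ℤ))-1))) * uu q ((i:ℤ)-n)) * (-q^(3*((i:ℤ)-n)+2)) := by
          ring
    _ = (ee (q^3) i * (-q^(2-3*(n:ℤ)))^i) * ((q^3)^i * (-q^(2-3*(n:ℤ)))) := by rw [ih, h3]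
    _ = ee (q^3) i * (q^3)^i * ((-q^(2-3*(n:ℤ)))^i * -q^(2-3*(n:ℤ))) := by ring

end Spec

section Spec2
variable {q : ℂ}

lemma stepA (hq : q ≠ 0) (n : ℕ) : ∏ k ∈ range (2*n), (1 + (-q^(2-3*(n:ℤ))) * (q^3)^k) =
    (∏ k ∈ range n, (-q^(-(3*(k:ℤ))-1))) *
      ∏ k ∈ range n, ((1 - q^(3*k+1)) * (1 - q^(3*k+2))) := by
  rw [two_mul, prod_range_add]
  have hsec : ∀ k ∈ range n, (1 + (-q^(2-3*(n:ℤ))) * (q^3)^(n+k)) = 1 - q^(3*k+2) := by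
    intro k hk
    have hp : (q^3)^(n+k) = q^(((3*(n+k) : ℕ):ℤ)) := by rw [zpow_natCast, pow_mul]
    have : (-q^(2-3*(n:ℤ))) * (q^3)^(n+k) = -q^(((3*k+2 : ℕ):ℤ)) := by
      rw [hp, neg_mul, ← zpow_add₀ hq]
      congr 2
      push_cast; ring
    rw [this, zpow_natCast]; ring
  have hfir : ∏ k ∈ range n, (1 + (-q^(2-3*(n:ℤ))) * (q^3)^k) =
      ∏ k ∈ range n, ((-q^(-(3*(k:ℤ))-1)) * (1 - q^(3*k+1))) := by
    rw [← prod_range_reflect]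
    apply prod_congr rfl
    intro j hj
    have hjn : j < n := mem_range.1 hj
    have hp : (q^3)^(n-1-j) = q^(((3*(n-1-j) : ℕ):ℤ)) := by rw [zpow_natCast, pow_mul]
    have hc : ((3*(n-1-j) : ℕ):ℤ) = 3*(n:ℤ) - 3 - 3*j := by
      push_cast [Nat.sub_sub]
      rw [Nat.cast_sub (by omega)]
      push_cast; ring
    have e1 : (-q^(2-3*(n:ℤ))) * (q^3)^(n-1-j) = -q^(-(3*(j:ℤ))-1) := by
      rw [hp, hc, neg_mul, ← zpow_add₀ hq]
      congr 2
      ring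
    have e2 : q^(-(3*(j:ℤ))-1) * q^(((3*j+1 : ℕ):ℤ)) = 1 := by
      rw [← zpow_add₀ hq]
      have : (-(3*(j:ℤ))-1) + ((3*j+1 : ℕ):ℤ) = 0 := by push_cast; ring
      rw [this, zpow_zero]
    rw [e1]
    rw [zpow_natCast] at e2
    linear_combination -e2
  rw [hfir, prod_congr rfl hsec, prod_mul_distrib, mul_assoc]
  congr 1
  rw [← prod_mul_distrib]

lemma claimB (hq : q ≠ 0) (h1 : ‖q‖ < 1) (n : ℕ) :
    ∏ k ∈ range n, ((1 - q^(3*k+1)) * (1 - q^(3*k+2))) =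
      ∑ i ∈ range (2*n+1), gb (q^3) (2*n) i * uu q ((i:ℤ) - n) := by
  have hq3 : ‖q^3‖ < 1 := by
    rw [norm_pow]
    exact pow_lt_one₀ (norm_nonneg _) h1 (by norm_num)
  have hg := gaussF hq3 (-q^(2-3*(n:ℤ))) (2*n)
  rw [stepA hq] at hg
  have hW : (∏ k ∈ range n, (-q^(-(3*(k:ℤ))-1))) ≠ 0 :=
    prod_ne_zero_iff.2 fun k _ => neg_ne_zero.2 (zpow_ne_zero _ hq)
  have hterm : ∀ i ∈ range (2*n+1),
      gb (q^3) (2*n) i * ee (q^3) i * (-q^(2-3*(n:ℤ)))^i =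
        (∏ k ∈ range n, (-q^(-(3*(k:ℤ))-1))) * (gb (q^3) (2*n) i * uu q ((i:ℤ) - n)) := by
    intro i _
    rw [show (∏ k ∈ range n, (-q^(-(3*(k:ℤ))-1))) * (gb (q^3) (2*n) i * uu q ((i:ℤ) - n)) =
      gb (q^3) (2*n) i * ((∏ k ∈ range n, (-q^(-(3*(k:ℤ))-1))) * uu q ((i:ℤ) - n)) by ring]
    rw [key hq n i]
    ring
  rw [sum_congr rfl hterm, ← mul_sum] at hg
  exact mul_left_cancel₀ hW hg

end Spec2

section Part4
variable {q : ℂ}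

lemma exp_comb (a b c d : ℂ) :
    Complex.exp a * (Complex.exp b / (Complex.exp c * Complex.exp d)) =
      Complex.exp (a + b - c - d) := by
  rw [← Complex.exp_add c d, div_eq_mul_inv, ← Complex.exp_neg, ← Complex.exp_add,
    ← Complex.exp_add]
  ring_nf

lemma merge3 (n : ℕ) : pp q (3*n) =
    pp (q^3) n * ∏ k ∈ range n, ((1 - q^(3*k+1)) * (1 - q^(3*k+2))) := by
  induction n with
  | zero => simp [pp]
  | succ n ih =>
    have h3 : 3*(n+1) = (3*n+1)+1+1 := by ring
    rw [h3, pp_succ, pp_succ, pp_succ, ih, pp_succ, prod_range_succ]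
    have e1 : (q^3)^(n+1) = q^(3*n+1+1+1) := by rw [← pow_mul]; ring_nf
    rw [e1, show 3*n+1+1 = 3*n+2 from rfl, show 3*n+2+1 = 3*n+3 from rfl,
      show 3*n+1+1+1 = 3*n+3 from rfl]
    ring

noncomputable def FF (q : ℂ) (n : ℕ) (j : ℤ) : ℂ :=
  if j.natAbs ≤ n then pp (q^3) n * gb (q^3) (2*n) ((j+n).toNat) * uu q j else 0

lemma tsum_FF (hq : q ≠ 0) (h1 : ‖q‖ < 1) (n : ℕ) : ∑' j : ℤ, FF q n j = pp q (3*n) := by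
  rw [tsum_eq_sum (s := Finset.Icc (-(n:ℤ)) n) (fun j hj => by
    rw [FF, if_neg]
    simp only [Finset.mem_Icc] at hj
    omega)]
  have hbij : ∑ j ∈ Finset.Icc (-(n:ℤ)) n, FF q n j =
      ∑ i ∈ range (2*n+1), pp (q^3) n * (gb (q^3) (2*n) i * uu q ((i:ℤ) - n)) := by
    apply Finset.sum_nbij' (fun j => ((j:ℤ)+n).toNat) (fun i => (i:ℤ)-n)
    · intro a ha; simp only [Finset.mem_Icc] at ha; simp only [mem_range]; omega
    · intro a ha; simp only [mem_range] at ha; simp only [Finset.mem_Icc]; omega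
    · intro a ha; simp only [Finset.mem_Icc] at ha; omega
    · intro a ha; simp only [mem_range] at ha; omega
    · intro a ha
      simp only [Finset.mem_Icc] at ha
      rw [FF, if_pos (by omega)]
      have : ((((a+n).toNat : ℕ)):ℤ) - n = a := by omega
      rw [this]
      ring
  rw [hbij, ← mul_sum, ← claimB hq h1, ← merge3]

lemma tendsto_pp3n (h1 : ‖q‖ < 1) :
    Tendsto (fun n => pp q (3*n)) atTop (𝓝 (qpInf q q)) := by
  have hq : qpInf q q = Complex.exp (∑' i, lg q i) := by
    rw [← tprod_eq_exp h1, qpInf]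
    exact tprod_congr fun i => by rw [pow_succ']
  rw [hq]
  exact (tendsto_pp h1).comp (tendsto_atTop_mono (fun n => by omega : ∀ n : ℕ, n ≤ 3*n) tendsto_id)

lemma hq3norm (h1 : ‖q‖ < 1) : ‖q^3‖ < 1 := by
  rw [norm_pow]; exact pow_lt_one₀ (norm_nonneg _) h1 (by norm_num)

lemma FF_tendsto (hq : q ≠ 0) (h1 : ‖q‖ < 1) (j : ℤ) :
    Tendsto (fun n => FF q n j) atTop (𝓝 (uu q j)) := by
  have hq3 := hq3norm (q := q) h1
  set Λ : ℂ := ∑' i, lg (q^3) i with hΛ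
  have t1 : Tendsto (fun m => ∑ i ∈ range m, lg (q^3) i) atTop (𝓝 Λ) := tendsto_ell hq3
  have t2 : Tendsto (fun n : ℕ => ∑ i ∈ range (2*n), lg (q^3) i) atTop (𝓝 Λ) :=
    t1.comp (tendsto_atTop_mono (fun n => by omega : ∀ n : ℕ, n ≤ 2*n) tendsto_id)
  have t3 : Tendsto (fun n : ℕ => ∑ i ∈ range ((j+n).toNat), lg (q^3) i) atTop (𝓝 Λ) :=
    t1.comp (tendsto_atTop_atTop.2 fun b => ⟨b + j.natAbs, fun n hn => by omega⟩)
  have t4 : Tendsto (fun n : ℕ => ∑ i ∈ range ((n-j).toNat), lg (q^3) i) atTop (𝓝 Λ) :=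
    t1.comp (tendsto_atTop_atTop.2 fun b => ⟨b + j.natAbs, fun n hn => by omega⟩)
  have tsum : Tendsto (fun n : ℕ => (∑ i ∈ range n, lg (q^3) i) + (∑ i ∈ range (2*n), lg (q^3) i)
      - (∑ i ∈ range ((j+n).toNat), lg (q^3) i) - (∑ i ∈ range ((n-j).toNat), lg (q^3) i))
      atTop (𝓝 0) := by
    have := ((t1.add t2).sub t3).sub t4
    simpa using this
  have texp : Tendsto (fun n : ℕ => Complex.exp ((∑ i ∈ range n, lg (q^3) i)
      + (∑ i ∈ range (2*n), lg (q^3) i)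
      - (∑ i ∈ range ((j+n).toNat), lg (q^3) i)
      - (∑ i ∈ range ((n-j).toNat), lg (q^3) i)) * uu q j) atTop (𝓝 (uu q j)) := by
    have := ((Complex.continuous_exp.tendsto 0).comp tsum).mul_const (uu q j)
    simpa using this
  apply texp.congr'
  filter_upwards [eventually_ge_atTop j.natAbs] with n hn
  rw [FF, if_pos hn]
  have h2n : 2*n - ((j+n).toNat) = (n-j).toNat := by omega
  have hle : (j+n).toNat ≤ 2*n := by omega
  rw [gb, if_pos hle, h2n]
  rw [pp_eq_exp hq3, pp_eq_exp hq3, pp_eq_exp hq3, pp_eq_exp hq3, exp_comb]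

lemma FF_bound (hq : q ≠ 0) (h1 : ‖q‖ < 1) (n : ℕ) (j : ℤ) :
    ‖FF q n j‖ ≤ Real.exp (4 * Slg (q^3)) * ‖uu q j‖ := by
  have hq3 := hq3norm (q := q) h1
  rw [FF]
  split_ifs with h
  · have h2n : 2*n - ((j+n).toNat) = (n-j).toNat := by omega
    have hle : (j+n).toNat ≤ 2*n := by omega
    rw [gb, if_pos hle, h2n]
    rw [pp_eq_exp hq3, pp_eq_exp hq3, pp_eq_exp hq3, pp_eq_exp hq3, exp_comb, norm_mul]
    apply mul_le_mul_of_nonneg_right _ (norm_nonneg _)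
    set w : ℂ := (∑ i ∈ range n, lg (q^3) i) + (∑ i ∈ range (2*n), lg (q^3) i)
      - (∑ i ∈ range ((j+n).toNat), lg (q^3) i) - (∑ i ∈ range ((n-j).toNat), lg (q^3) i) with hw
    have hwb : ‖w‖ ≤ 4 * Slg (q^3) := by
      have b1 := ell_bound hq3 n
      have b2 := ell_bound hq3 (2*n)
      have b3 := ell_bound hq3 ((j+n).toNat)
      have b4 := ell_bound hq3 ((n-j).toNat)
      calc ‖w‖ ≤ ‖(∑ i ∈ range n, lg (q^3) i) + (∑ i ∈ range (2*n), lg (q^3) i)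
          - (∑ i ∈ range ((j+n).toNat), lg (q^3) i)‖ + ‖(∑ i ∈ range ((n-j).toNat), lg (q^3) i)‖ :=
            norm_sub_le _ _
      _ ≤ (‖(∑ i ∈ range n, lg (q^3) i) + (∑ i ∈ range (2*n), lg (q^3) i)‖
          + ‖(∑ i ∈ range ((j+n).toNat), lg (q^3) i)‖) + ‖(∑ i ∈ range ((n-j).toNat), lg (q^3) i)‖ := by
            gcongr; exact norm_sub_le _ _
      _ ≤ ((‖(∑ i ∈ range n, lg (q^3) i)‖ + ‖(∑ i ∈ range (2*n), lg (q^3) i)‖)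
          + ‖(∑ i ∈ range ((j+n).toNat), lg (q^3) i)‖) + ‖(∑ i ∈ range ((n-j).toNat), lg (q^3) i)‖ := by
            gcongr; exact norm_add_le _ _
      _ ≤ ((Slg (q^3) + Slg (q^3)) + Slg (q^3)) + Slg (q^3) := by gcongr
      _ = 4 * Slg (q^3) := by ring
    calc ‖Complex.exp w‖ = Real.exp w.re := Complex.norm_exp w
    _ ≤ Real.exp ‖w‖ := Real.exp_le_exp.2 (Complex.re_le_norm w)
    _ ≤ Real.exp (4 * Slg (q^3)) := Real.exp_le_exp.2 hwb
  · simp only [norm_zero]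
    positivity

lemma summable_norm_uu (h0 : 0 < ‖q‖) (h1 : ‖q‖ < 1) :
    Summable (fun j : ℤ => ‖uu q j‖) := by
  have hne : ‖q‖ ≠ 0 := ne_of_gt h0
  have key : ∀ j : ℤ, ‖uu q j‖ ≤ ‖q‖⁻¹ * ‖q‖^(j.natAbs) := by
    intro j
    have hE : ((j.natAbs : ℤ)) - 1 ≤ j*(3*j+1)/2 := by
      have h2 := twoE j
      rcases le_or_gt 0 j with h | h
      · have ha : (j.natAbs : ℤ) = j := Int.natAbs_of_nonneg h
        have : 2*((j.natAbs:ℤ) - 1) ≤ 2*(j*(3*j+1)/2) := by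
          rw [h2, ha]; nlinarith [sq_nonneg (j-1), sq_nonneg j]
        linarith
      · have ha : (j.natAbs : ℤ) = -j := by omega
        have : 2*((j.natAbs:ℤ) - 1) ≤ 2*(j*(3*j+1)/2) := by
          rw [h2, ha]; nlinarith [sq_nonneg (j+1), sq_nonneg j]
        linarith
    have : ‖uu q j‖ = ‖q‖^(j*(3*j+1)/2) := by
      rw [uu, norm_mul, norm_zpow, norm_zpow]
      norm_num
    rw [this]
    calc ‖q‖^(j*(3*j+1)/2) ≤ ‖q‖^((j.natAbs : ℤ) - 1) :=
      zpow_le_zpow_right_of_le_one₀ h0 h1.le hE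
    _ = ‖q‖⁻¹ * ‖q‖^(j.natAbs) := by
      rw [zpow_sub₀ hne, zpow_natCast, zpow_one]; ring
  apply Summable.of_nonneg_of_le (fun j => norm_nonneg _) key
  apply Summable.mul_left
  apply Summable.of_nat_of_neg
  · simpa using summable_geometric_of_lt_one (norm_nonneg q) h1
  · have : ∀ n : ℕ, ‖q‖^((-(n:ℤ)).natAbs) = ‖q‖^n := fun n => by simp
    rw [funext this]
    exact summable_geometric_of_lt_one (norm_nonneg q) h1

lemma pentagonal_uu (h0 : 0 < ‖q‖) (h1 : ‖q‖ < 1) : qpInf q q = ∑' j : ℤ, uu q j := by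
  have hq : q ≠ 0 := by simpa using h0
  have tA : Tendsto (fun n => ∑' j : ℤ, FF q n j) atTop (𝓝 (∑' j : ℤ, uu q j)) := by
    apply tendsto_tsum_of_dominated_convergence
      ((summable_norm_uu h0 h1).mul_left (Real.exp (4 * Slg (q^3))))
      (FF_tendsto hq h1)
    exact Filter.Eventually.of_forall (fun n j => FF_bound hq h1 n j)
  have tB : Tendsto (fun n => ∑' j : ℤ, FF q n j) atTop (𝓝 (qpInf q q)) :=
    (tendsto_pp3n h1).congr (fun n => (tsum_FF hq h1 n).symm)
  exact tendsto_nhds_unique tB tA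

end Part4

section Part5
variable {q : ℂ}

lemma twoD (x : ℤ) : 2*(x*(x-1)/2) = x*(x-1) := by
  apply Int.two_mul_ediv_two_of_even
  have := Int.even_mul_succ_self (x-1)
  have h : (x-1)*((x-1)+1) = x*(x-1) := by ring
  rwa [h] at this

noncomputable def TT (q : ℂ) (a : ℤ) : ℂ := ∑' k : ℤ, (-1:ℂ)^k * q^(3*(k*(k-1)/2) + a*k)

lemma summable_gen (h0 : 0 < ‖q‖) (h1 : ‖q‖ < 1) (e : ℤ → ℤ) (M : ℤ)
    (hE : ∀ k : ℤ, (k.natAbs:ℤ) - M ≤ e k) :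
    Summable (fun k : ℤ => (-1:ℂ)^k * q^(e k)) := by
  have hne : ‖q‖ ≠ 0 := ne_of_gt h0
  apply Summable.of_norm
  have hval : ∀ k : ℤ, ‖(-1:ℂ)^k * q^(e k)‖ = ‖q‖^(e k) := by
    intro k
    rw [norm_mul, norm_zpow, norm_zpow]
    norm_num
  have key : ∀ k : ℤ, ‖(-1:ℂ)^k * q^(e k)‖ ≤ ‖q‖^(-M) * ‖q‖^(k.natAbs) := by
    intro k
    rw [hval]
    calc ‖q‖^(e k) ≤ ‖q‖^((k.natAbs:ℤ) - M) :=
      zpow_le_zpow_right_of_le_one₀ h0 h1.le (hE k)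
    _ = ‖q‖^(-M) * ‖q‖^(k.natAbs) := by
      rw [sub_eq_add_neg, add_comm, zpow_add₀ hne, zpow_natCast]
  apply Summable.of_nonneg_of_le (fun k => norm_nonneg _) key
  apply Summable.mul_left
  apply Summable.of_nat_of_neg
  · simpa using summable_geometric_of_lt_one (norm_nonneg q) h1
  · have : ∀ n : ℕ, ‖q‖^((-(n:ℤ)).natAbs) = ‖q‖^n := fun n => by simp
    rw [funext this]
    exact summable_geometric_of_lt_one (norm_nonneg q) h1

lemma summable_TT (h0 : 0 < ‖q‖) (h1 : ‖q‖ < 1) (a : ℤ) :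
    Summable (fun k : ℤ => (-1:ℂ)^k * q^(3*(k*(k-1)/2) + a*k)) := by
  apply summable_gen h0 h1 _ (a^2+2)
  intro k
  have h2 := twoD k
  rcases le_or_gt 0 k with h | h
  · have ha : (k.natAbs : ℤ) = k := Int.natAbs_of_nonneg h
    have : 2*((k.natAbs:ℤ) - (a^2+2)) ≤ 2*(3*(k*(k-1)/2) + a*k) := by
      have e1 : 2*(3*(k*(k-1)/2) + a*k) = 3*(2*(k*(k-1)/2)) + 2*a*k := by ring
      rw [e1, h2, ha]
      nlinarith [sq_nonneg (k+a), sq_nonneg (4*k-5)]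
    linarith
  · have ha : (k.natAbs : ℤ) = -k := by omega
    have : 2*((k.natAbs:ℤ) - (a^2+2)) ≤ 2*(3*(k*(k-1)/2) + a*k) := by
      have e1 : 2*(3*(k*(k-1)/2) + a*k) = 3*(2*(k*(k-1)/2)) + 2*a*k := by ring
      rw [e1, h2, ha]
      nlinarith [sq_nonneg (k+a), sq_nonneg k]
    linarith

lemma Hsplit (h0 : 0 < ‖q‖) (h1 : ‖q‖ < 1) (n : ℤ) : H q n = TT q (n+1) - TT q (n+2) := by
  have hq : q ≠ 0 := by simpa using h0
  have hcong : ∀ k : ℤ, (-1:ℂ)^k * q^(3*(k*(k-1)/2)) * (1-q^k) * q^((1+n)*k)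
      = (-1:ℂ)^k * q^(3*(k*(k-1)/2) + (n+1)*k) - (-1:ℂ)^k * q^(3*(k*(k-1)/2) + (n+2)*k) := by
    intro k
    rw [zpow_add₀ hq, zpow_add₀ hq]
    have e1 : (n+1)*k = (1+n)*k := by ring
    have e2 : (n+2)*k = k + (1+n)*k := by ring
    rw [e1, e2, zpow_add₀ hq k ((1+n)*k)]
    ring
  rw [H, tsum_congr hcong, Summable.tsum_sub (summable_TT h0 h1 (n+1)) (summable_TT h0 h1 (n+2))]
  rfl

lemma neg_one_zpow_neg (k : ℤ) : (-1:ℂ)^(-k) = (-1:ℂ)^k := by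
  rcases Int.even_or_odd k with h | h
  · rw [h.neg_one_zpow, (h.neg).neg_one_zpow]
  · rw [h.neg_one_zpow, (h.neg).neg_one_zpow]

lemma TT_shift (hq : q ≠ 0) (a : ℤ) : TT q a = -q^a * TT q (a+3) := by
  have hstep : ∀ k : ℤ, (-1:ℂ)^(k+1) * q^(3*((k+1)*((k+1)-1)/2) + a*(k+1))
      = -q^a * ((-1:ℂ)^k * q^(3*(k*(k-1)/2) + (a+3)*k)) := by
    intro k
    have hE : 3*((k+1)*((k+1)-1)/2) + a*(k+1) = a + (3*(k*(k-1)/2) + (a+3)*k) := by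
      apply mul_left_cancel₀ (two_ne_zero (α := ℤ))
      calc 2*(3*((k+1)*((k+1)-1)/2) + a*(k+1))
          = 3*(2*((k+1)*((k+1)-1)/2)) + 2*a*(k+1) := by ring
      _ = 3*((k+1)*((k+1)-1)) + 2*a*(k+1) := by rw [twoD]
      _ = 3*(k*(k-1)) + 2*(a + (a+3)*k) := by ring
      _ = 3*(2*(k*(k-1)/2)) + 2*(a + (a+3)*k) := by rw [twoD]
      _ = 2*(a + (3*(k*(k-1)/2) + (a+3)*k)) := by ring
    rw [hE, zpow_add₀ hq, zpow_add₀ (by norm_num : (-1:ℂ) ≠ 0) k 1]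
    ring
  calc TT q a = ∑' k : ℤ, (-1:ℂ)^(k+1) * q^(3*((k+1)*((k+1)-1)/2) + a*(k+1)) :=
    ((Equiv.addRight (1:ℤ)).tsum_eq
      (fun k => (-1:ℂ)^k * q^(3*(k*(k-1)/2) + a*k))).symm
  _ = ∑' k : ℤ, -q^a * ((-1:ℂ)^k * q^(3*(k*(k-1)/2) + (a+3)*k)) := tsum_congr hstep
  _ = -q^a * TT q (a+3) := by rw [tsum_mul_left]; rfl

lemma TT_shift' (hq : q ≠ 0) (a : ℤ) : TT q (a+3) = -q^(-a) * TT q a := by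
  rw [TT_shift hq a]
  have : q^(-a) * q^a = 1 := by rw [← zpow_add₀ hq]; norm_num
  calc TT q (a+3) = (q^(-a) * q^a) * TT q (a+3) := by rw [this, one_mul]
  _ = -q^(-a) * (-q^a * TT q (a+3)) := by ring

lemma TT_refl (hq : q ≠ 0) (a : ℤ) : TT q a = TT q (3-a) := by
  have hstep : ∀ k : ℤ, (-1:ℂ)^(-k) * q^(3*((-k)*((-k)-1)/2) + a*(-k))
      = (-1:ℂ)^k * q^(3*(k*(k-1)/2) + (3-a)*k) := by
    intro k
    have hE : 3*((-k)*((-k)-1)/2) + a*(-k) = 3*(k*(k-1)/2) + (3-a)*k := by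
      apply mul_left_cancel₀ (two_ne_zero (α := ℤ))
      calc 2*(3*((-k)*((-k)-1)/2) + a*(-k)) = 3*(2*((-k)*((-k)-1)/2)) - 2*a*k := by ring
      _ = 3*((-k)*((-k)-1)) - 2*a*k := by rw [twoD]
      _ = 3*(k*(k-1)) + 2*((3-a)*k) - 2*a*k + 2*a*k := by ring
      _ = 3*(2*(k*(k-1)/2)) + 2*((3-a)*k) := by rw [twoD]; ring
      _ = 2*(3*(k*(k-1)/2) + (3-a)*k) := by ring
    rw [hE, neg_one_zpow_neg]
  calc TT q a = ∑' k : ℤ, (-1:ℂ)^(-k) * q^(3*((-k)*((-k)-1)/2) + a*(-k)) :=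
    ((Equiv.neg ℤ).tsum_eq (fun k => (-1:ℂ)^k * q^(3*(k*(k-1)/2) + a*k))).symm
  _ = ∑' k : ℤ, (-1:ℂ)^k * q^(3*(k*(k-1)/2) + (3-a)*k) := tsum_congr hstep
  _ = TT q (3-a) := rfl

lemma TT_three (hq : q ≠ 0) : TT q 3 = 0 := by
  have h := TT_refl hq 3
  norm_num at h
  have h2 := TT_shift hq 0
  norm_num at h2
  rw [← h] at h2
  linear_combination (1/2 : ℂ) * h2

lemma TT_mult3 (hq : q ≠ 0) : ∀ m : ℕ, TT q (3*(m:ℤ)+3) = 0 := by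
  intro m
  induction m with
  | zero => simpa using TT_three hq
  | succ m ih =>
    have : (3*((m+1:ℕ):ℤ)+3) = (3*(m:ℤ)+3)+3 := by push_cast; ring
    rw [this, TT_shift' hq, ih, mul_zero]

lemma TT_two (h0 : 0 < ‖q‖) (h1 : ‖q‖ < 1) : TT q 2 = qpInf q q := by
  have hq : q ≠ 0 := by simpa using h0
  rw [pentagonal_uu h0 h1, TT]
  apply tsum_congr
  intro k
  rw [uu]
  congr 1
  congr 1
  apply mul_left_cancel₀ (two_ne_zero (α := ℤ))
  calc 2*(3*(k*(k-1)/2) + 2*k) = 3*(2*(k*(k-1)/2)) + 4*k := by ring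
  _ = 3*(k*(k-1)) + 4*k := by rw [twoD]
  _ = k*(3*k+1) := by ring
  _ = 2*(k*(3*k+1)/2) := (twoE k).symm

lemma even_A (m : ℤ) : Even (3*m^2+m) := by
  rcases Int.even_or_odd m with ⟨t, rfl⟩ | ⟨t, rfl⟩
  · exact ⟨6*t^2+t, by ring⟩
  · exact ⟨6*t^2+7*t+2, by ring⟩

lemma even_B (m : ℤ) : Even (3*m^2-m) := by
  rcases Int.even_or_odd m with ⟨t, rfl⟩ | ⟨t, rfl⟩
  · exact ⟨6*t^2-t, by ring⟩
  · exact ⟨6*t^2+5*t+1, by ring⟩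

lemma TT2m (h0 : 0 < ‖q‖) (h1 : ‖q‖ < 1) : ∀ m : ℕ,
    TT q (3*(m:ℤ)+2) = (-1:ℂ)^m * q^(-((3*(m:ℤ)^2+(m:ℤ))/2)) * qpInf q q := by
  have hq : q ≠ 0 := by simpa using h0
  intro m
  induction m with
  | zero => simpa using TT_two h0 h1
  | succ m ih =>
    have hc : (3*((m+1:ℕ):ℤ)+2) = (3*(m:ℤ)+2)+3 := by push_cast; ring
    rw [hc, TT_shift' hq, ih]
    have hE : -((3*(((m+1:ℕ)):ℤ)^2+((m+1:ℕ):ℤ))/2) = -(3*(m:ℤ)+2) + -((3*(m:ℤ)^2+(m:ℤ))/2) := by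
      have ha := Int.two_mul_ediv_two_of_even (even_A (m:ℤ))
      have hb := Int.two_mul_ediv_two_of_even (even_A ((m:ℤ)+1))
      apply mul_left_cancel₀ (two_ne_zero (α := ℤ))
      push_cast
      calc 2*(-((3*((m:ℤ)+1)^2+((m:ℤ)+1))/2)) = -(2*((3*((m:ℤ)+1)^2+((m:ℤ)+1))/2)) := by ring
      _ = -(3*((m:ℤ)+1)^2+((m:ℤ)+1)) := by rw [hb]
      _ = -(3*(m:ℤ)^2+(m:ℤ)) - 2*(3*(m:ℤ)+2) := by ring
      _ = -(2*((3*(m:ℤ)^2+(m:ℤ))/2)) - 2*(3*(m:ℤ)+2) := by rw [ha]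
      _ = 2*(-(3*(m:ℤ)+2) + -((3*(m:ℤ)^2+(m:ℤ))/2)) := by ring
    rw [hE, zpow_add₀ hq, pow_succ]
    ring

lemma TT1m (h0 : 0 < ‖q‖) (h1 : ‖q‖ < 1) : ∀ m : ℕ,
    TT q (3*(m:ℤ)+1) = (-1:ℂ)^m * q^(-((3*(m:ℤ)^2-(m:ℤ))/2)) * qpInf q q := by
  have hq : q ≠ 0 := by simpa using h0
  intro m
  induction m with
  | zero =>
    have h := TT_refl hq 1
    norm_num at h
    rw [show ((3:ℤ)*((0:ℕ):ℤ)+1) = 1 by norm_num, h]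
    simpa using TT_two h0 h1
  | succ m ih =>
    have hc : (3*((m+1:ℕ):ℤ)+1) = (3*(m:ℤ)+1)+3 := by push_cast; ring
    rw [hc, TT_shift' hq, ih]
    have hE : -((3*(((m+1:ℕ)):ℤ)^2-((m+1:ℕ):ℤ))/2) = -(3*(m:ℤ)+1) + -((3*(m:ℤ)^2-(m:ℤ))/2) := by
      have ha := Int.two_mul_ediv_two_of_even (even_B (m:ℤ))
      have hb := Int.two_mul_ediv_two_of_even (even_B ((m:ℤ)+1))
      apply mul_left_cancel₀ (two_ne_zero (α := ℤ))
      push_cast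
      calc 2*(-((3*((m:ℤ)+1)^2-((m:ℤ)+1))/2)) = -(2*((3*((m:ℤ)+1)^2-((m:ℤ)+1))/2)) := by ring
      _ = -(3*((m:ℤ)+1)^2-((m:ℤ)+1)) := by rw [hb]
      _ = -(3*(m:ℤ)^2-(m:ℤ)) - 2*(3*(m:ℤ)+1) := by ring
      _ = -(2*((3*(m:ℤ)^2-(m:ℤ))/2)) - 2*(3*(m:ℤ)+1) := by rw [ha]
      _ = 2*(-(3*(m:ℤ)+1) + -((3*(m:ℤ)^2-(m:ℤ))/2)) := by ring
    rw [hE, zpow_add₀ hq, pow_succ]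
    ring

end Part5

theorem stmt2 (q : ℂ) (h0 : 0 < ‖q‖) (h1 : ‖q‖ < 1) (L : ℕ) :
    H q (3 * L) = qpInf q q * (-1 : ℂ) ^ L * (q ^ L - 1) * q ^ (-((3 * (L : ℤ) ^ 2 + L) / 2))
    ∧ H q (3 * L + 1) = qpInf q q * (-1 : ℂ) ^ L * q ^ (-((3 * (L : ℤ) ^ 2 + L) / 2))
    ∧ H q (3 * L + 2) = qpInf q q * (-1 : ℂ) ^ L * q ^ (-((3 * (L : ℤ) + 2) * (L + 1) / 2)) := by
  have hq : q ≠ 0 := by simpa using h0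
  have ha := Int.two_mul_ediv_two_of_even (even_A (L:ℤ))
  have hb := Int.two_mul_ediv_two_of_even (even_B (L:ℤ))
  refine ⟨?_, ?_, ?_⟩
  · rw [Hsplit h0 h1, TT1m h0 h1 L, TT2m h0 h1 L]
    have hL : (q:ℂ)^(L:ℕ) * q^(-((3*(L:ℤ)^2+(L:ℤ))/2)) = q^(-((3*(L:ℤ)^2-(L:ℤ))/2)) := by
      rw [← zpow_natCast q L, ← zpow_add₀ hq]
      congr 1
      apply mul_left_cancel₀ (two_ne_zero (α := ℤ))
      calc 2*((L:ℤ) + -((3*(L:ℤ)^2+(L:ℤ))/2)) = 2*(L:ℤ) - 2*((3*(L:ℤ)^2+(L:ℤ))/2) := by ring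
      _ = 2*(L:ℤ) - (3*(L:ℤ)^2+(L:ℤ)) := by rw [ha]
      _ = -(3*(L:ℤ)^2-(L:ℤ)) := by ring
      _ = -(2*((3*(L:ℤ)^2-(L:ℤ))/2)) := by rw [hb]
      _ = 2*(-((3*(L:ℤ)^2-(L:ℤ))/2)) := by ring
    linear_combination (-((-1:ℂ)^L * qpInf q q)) * hL
  · rw [Hsplit h0 h1, show (3*(L:ℤ)+1+1) = 3*(L:ℤ)+2 by ring,
      show (3*(L:ℤ)+1+2) = 3*(L:ℤ)+3 by ring, TT2m h0 h1 L, TT_mult3 hq L]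
    ring
  · rw [Hsplit h0 h1, show (3*(L:ℤ)+2+1) = 3*(L:ℤ)+3 by ring, TT_mult3 hq L]
    have hc : (3*(L:ℤ)+2+2) = 3*((L+1:ℕ):ℤ)+1 := by push_cast; ring
    rw [hc, TT1m h0 h1 (L+1)]
    have hE : -((3*(((L+1:ℕ)):ℤ)^2-((L+1:ℕ):ℤ))/2) = -((3*(L:ℤ)+2)*((L:ℤ)+1)/2) := by
      congr 1
      congr 1
      push_cast
      ring
    rw [hE, pow_succ]
    ring
end

section
/- For complex q with 0 < |q| < 1 and all integers n ≥ 1 and 1 ≤ i ≤ n: [2n−1 choose i+n]_q q^i − [2n−1 choose n−i]_q = −[2n choose i+n]_q (1 − q^i)/(1 − q^n). -/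
noncomputable def qp (q x : ℂ) (n : ℕ) : ℂ := ∏ i ∈ Finset.range n, (1 - x * q ^ i)

noncomputable def qbinom (q : ℂ) (m r : ℕ) : ℂ :=
  if r ≤ m then qp q q m / (qp q q r * qp q q (m - r)) else 0

lemma one_sub_pow_ne (q : ℂ) (h1 : ‖q‖ < 1) (k : ℕ) (hk : 1 ≤ k) : 1 - q ^ k ≠ 0 := by
  intro h
  have hq : q ^ k = 1 := by linear_combination -h
  have : ‖q ^ k‖ < 1 := by
    rw [norm_pow]
    exact pow_lt_one₀ (norm_nonneg q) h1 (by omega)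
  rw [hq] at this
  simp at this

lemma qp_ne (q : ℂ) (h1 : ‖q‖ < 1) (m : ℕ) : qp q q m ≠ 0 := by
  unfold qp
  rw [Finset.prod_ne_zero_iff]
  intro j _
  have : q * q ^ j = q ^ (j + 1) := (pow_succ' q j).symm
  rw [this]
  exact fun h => one_sub_pow_ne q h1 (j + 1) (by omega) (by linear_combination h)

lemma qp_succ (q : ℂ) (k : ℕ) : qp q q (k + 1) = qp q q k * (1 - q ^ (k + 1)) := by
  unfold qp
  rw [Finset.prod_range_succ, ← pow_succ' q k]

theorem stmt15 (q : ℂ) (h0 : 0 < ‖q‖) (h1 : ‖q‖ < 1) (n i : ℕ)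
    (hn : 1 ≤ n) (hi : 1 ≤ i) (hin : i ≤ n) :
    qbinom q (2 * n - 1) (i + n) * q ^ i - qbinom q (2 * n - 1) (n - i)
      = -(qbinom q (2 * n) (i + n) * (1 - q ^ i) / (1 - q ^ n)) := by
  rcases eq_or_lt_of_le hin with rfl | hlt
  · -- i = n
    have e1 : ¬ (i + i ≤ 2 * i - 1) := by omega
    have e2 : i - i = 0 := by omega
    have e3 : 2 * i - 1 - 0 = 2 * i - 1 := by omega
    have e4 : i + i ≤ 2 * i := by omega
    have e5 : i + i = 2 * i := by omega
    have e6 : 2 * i - (i + i) = 0 := by omega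
    rw [qbinom, qbinom, qbinom, if_neg e1, if_pos (by omega), if_pos e4, e2, e3, e6]
    have hq0 : qp q q 0 = 1 := by simp [qp]
    have hP : qp q q (2 * i - 1) ≠ 0 := qp_ne q h1 _
    have hP2 : qp q q (2 * i) ≠ 0 := qp_ne q h1 _
    have hN : (1 : ℂ) - q ^ i ≠ 0 := one_sub_pow_ne q h1 i hi
    rw [hq0, e5]
    field_simp
    ring
  · -- i < n
    obtain ⟨j, rfl⟩ : ∃ j, n = i + (j + 1) := ⟨n - i - 1, by omega⟩
    have e1 : 2 * (i + (j + 1)) - 1 = 2 * i + 2 * j + 1 := by omega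
    have e2 : i + (i + (j + 1)) = 2 * i + j + 1 := by omega
    have e3 : i + (j + 1) - i = j + 1 := by omega
    have e4 : 2 * i + 2 * j + 1 - (2 * i + j + 1) = j := by omega
    have e5 : 2 * i + 2 * j + 1 - (j + 1) = 2 * i + j := by omega
    have e6 : 2 * (i + (j + 1)) = 2 * i + 2 * j + 2 := by omega
    have e7 : 2 * i + 2 * j + 2 - (2 * i + j + 1) = j + 1 := by omega
    rw [qbinom, qbinom, qbinom, e1, e2, e3, e6, if_pos (by omega), if_pos (by omega),
      if_pos (by omega), e4, e5, e7]
    have hA : qp q q (2 * i + j) ≠ 0 := qp_ne q h1 _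
    have hB : qp q q j ≠ 0 := qp_ne q h1 _
    have f1 : qp q q (2 * i + j + 1) = qp q q (2 * i + j) * (1 - q ^ (2 * i + j + 1)) :=
      qp_succ q _
    have f2 : qp q q (j + 1) = qp q q j * (1 - q ^ (j + 1)) := qp_succ q _
    have f3 : qp q q (2 * i + 2 * j + 2) = qp q q (2 * i + 2 * j + 1) * (1 - q ^ (2 * i + 2 * j + 2)) :=
      qp_succ q _
    have hC : (1 : ℂ) - q ^ (2 * i + j + 1) ≠ 0 := one_sub_pow_ne q h1 _ (by omega)
    have hD : (1 : ℂ) - q ^ (j + 1) ≠ 0 := one_sub_pow_ne q h1 _ (by omega)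
    have hE : (1 : ℂ) - q ^ (i + (j + 1)) ≠ 0 := one_sub_pow_ne q h1 _ (by omega)
    rw [f1, f2, f3]
    field_simp
    ring
end
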